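/- arXiv:1406.2597 — 3 statements merged into one kernel-verified Lean document; each statement's English description precedes it below -/
import Mathlib

section
/- For every x ∈ ℓ∞ the limit t(x) = lim_{θ→1⁻} limsup_{n→∞} Θ_{θ,n}(x) exists as a real number, i.e., the function θ ↦ limsup_{n→∞} Θ_{θ,n}(x) converges as θ → 1 from the left. -/
open Filter Topology

noncomputable section

/-- The space `ℓ∞` of bounded real sequences. -/
abbrev EllInfty : Type := lp (fun _ : ℕ => ℝ) ⊤

/-- The characteristic sequence of a set `A ⊆ ℕ` (as a plain function). -/
def chiFun (A : Set ℕ) : ℕ → ℝ := A.indicator 1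

lemma chiFun_memℓp (A : Set ℕ) : Memℓp (chiFun A) ⊤ := by
  apply memℓp_infty
  refine ⟨1, ?_⟩
  rintro r ⟨n, rfl⟩
  by_cases h : n ∈ A <;> simp [chiFun, Set.indicator, h]

/-- The characteristic sequence of a set `A ⊆ ℕ` as an element of `ℓ∞`. -/
def chi (A : Set ℕ) : EllInfty := ⟨chiFun A, chiFun_memℓp A⟩

/-- `A(n) = |A ∩ {1,…,n}|` (as a real number). -/
def count (A : Set ℕ) (n : ℕ) : ℝ := ∑ k ∈ Finset.Icc 1 n, chiFun A k

/-- `A` has asymptotic density `d`, i.e. `A(n)/n → d`. -/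
def HasDensity (A : Set ℕ) (d : ℝ) : Prop :=
  Tendsto (fun n => count A n / n) atTop (𝓝 d)

/-- A density measure: a finitely additive measure `μ : 𝒫(ℕ) → [0,1]` with `μ(ℕ) = 1`
which extends the asymptotic density. -/
def IsDensityMeasure (μ : Set ℕ → ℝ) : Prop :=
  (∀ A B : Set ℕ, Disjoint A B → μ (A ∪ B) = μ A + μ B) ∧
  (∀ A : Set ℕ, μ A ∈ Set.Icc (0 : ℝ) 1) ∧
  μ Set.univ = 1 ∧
  (∀ A d, HasDensity A d → μ A = d)

/-- The sequence of Cesàro averages `(x₁ + … + xₙ)/n`. -/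
def cesaroAvg (x : ℕ → ℝ) (n : ℕ) : ℝ := (∑ i ∈ Finset.Icc 1 n, x i) / n

/-- `x` has Cesàro mean `c`. -/
def HasCesaro (x : ℕ → ℝ) (c : ℝ) : Prop := Tendsto (cesaroAvg x) atTop (𝓝 c)

/-- A functional on `ℓ∞` is positive if it is nonnegative on nonnegative sequences. -/
def IsPositiveFunctional (f : EllInfty → ℝ) : Prop :=
  ∀ x : EllInfty, (∀ n, 0 ≤ x n) → 0 ≤ f x

/-- A functional on `ℓ∞` extends the Cesàro mean. -/
def ExtendsCesaro (f : EllInfty → ℝ) : Prop :=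
  ∀ (x : EllInfty) (c : ℝ), HasCesaro (⇑x) c → f x = c

/-- The set of positive continuous linear functionals on `ℓ∞` extending the Cesàro mean. -/
def Cesex : Set (EllInfty →L[ℝ] ℝ) :=
  {f | IsPositiveFunctional f ∧ ExtendsCesaro f}

/-- `f_C(x) = sup { f(x) : f ∈ Cesex }`. -/
def fC (x : EllInfty) : ℝ := sSup ((fun f : EllInfty →L[ℝ] ℝ => f x) '' Cesex)

/-- `Θ_{θ,n}(x) = (Σ_{θn < i ≤ n} x_i) / (n(1-θ))`. -/
def Theta (x : ℕ → ℝ) (θ : ℝ) (n : ℕ) : ℝ :=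
  (∑ i ∈ Finset.Icc 1 n, if θ * n < (i : ℝ) then x i else 0) / (n * (1 - θ))

/-- `Θ_θ(x) = limsup_{n → ∞} Θ_{θ,n}(x)`. -/
def ThetaSup (x : ℕ → ℝ) (θ : ℝ) : ℝ := limsup (Theta x θ) atTop

/-- `t(x) = lim_{θ → 1⁻} Θ_θ(x)`. -/
def tFun (x : ℕ → ℝ) : ℝ := limUnder (𝓝[<] (1 : ℝ)) (ThetaSup x)

/-- `A_α(n) = Σ_{k ∈ A, k ≤ n} k^α`. -/
def aSum (A : Set ℕ) (α : ℝ) (n : ℕ) : ℝ :=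
  ∑ k ∈ Finset.Icc 1 n, chiFun A k * (k : ℝ) ^ α

/-- The upper `α`-density `d̄_α(A) = limsup_{n→∞} A_α(n)/ℕ_α(n)`. -/
def upperADens (A : Set ℕ) (α : ℝ) : ℝ :=
  limsup (fun n => aSum A α n / aSum Set.univ α n) atTop

/-- The lower `α`-density `d̲_α(A) = liminf_{n→∞} A_α(n)/ℕ_α(n)`. -/
def lowerADens (A : Set ℕ) (α : ℝ) : ℝ :=
  liminf (fun n => aSum A α n / aSum Set.univ α n) atTop

/-- `d̄_∞(A) = lim_{α→∞} d̄_α(A)`. -/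
def dInftyUpper (A : Set ℕ) : ℝ := limUnder (atTop : Filter ℝ) (upperADens A)

/-- `d̲_∞(A) = lim_{α→∞} d̲_α(A)`. -/
def dInftyLower (A : Set ℕ) : ℝ := limUnder (atTop : Filter ℝ) (lowerADens A)

/-- The quotient `(A(n) - A(⌊θn⌋))/(n - θn)` appearing in the Pólya density. -/
def polyaQuot (A : Set ℕ) (θ : ℝ) (n : ℕ) : ℝ :=
  (count A n - count A ⌊θ * n⌋₊) / (n - θ * n)

/-- The upper Pólya density `p̄(A)`. -/
def pUpper (A : Set ℕ) : ℝ :=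
  limUnder (𝓝[<] (1 : ℝ)) (fun θ => limsup (polyaQuot A θ) atTop)

/-- The lower Pólya density `p̲(A)`. -/
def pLower (A : Set ℕ) : ℝ :=
  limUnder (𝓝[<] (1 : ℝ)) (fun θ => liminf (polyaQuot A θ) atTop)

/-- `λ̄(A) = sup { μ(A) : μ a density measure }`. -/
def lamUpper (A : Set ℕ) : ℝ := sSup {r | ∃ μ, IsDensityMeasure μ ∧ μ A = r}

/-- `λ̲(A) = inf { μ(A) : μ a density measure }`. -/
def lamLower (A : Set ℕ) : ℝ := sInf {r | ∃ μ, IsDensityMeasure μ ∧ μ A = r}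

/-- `d̄*(A) = inf { d(B) : B ⊇ A, B ∈ 𝒟 }`. -/
def dUpperStar (A : Set ℕ) : ℝ := sInf {r | ∃ B, A ⊆ B ∧ HasDensity B r}

/-- `d̲*(A) = sup { d(B) : B ⊆ A, B ∈ 𝒟 }`. -/
def dLowerStar (A : Set ℕ) : ℝ := sSup {r | ∃ B, B ⊆ A ∧ HasDensity B r}

/-- The `ℱ`-limit of a (bounded) real sequence along an ultrafilter `ℱ`:
the unique `L` with `Tendsto x ℱ (𝓝 L)` (when it exists). -/
def ulim (F : Ultrafilter ℕ) (x : ℕ → ℝ) : ℝ := limUnder (F : Filter ℕ) x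

/-- An ultrafilter is free (non-principal) iff it contains all cofinite sets. -/
def IsFreeUltrafilter (F : Ultrafilter ℕ) : Prop := (F : Filter ℕ) ≤ Filter.cofinite

/-- The set of positive functionals extending Cesàro mean, inside the weak-* dual of `ℓ∞`. -/
def CesexW : Set (WeakDual ℝ EllInfty) :=
  {f | (∀ x : EllInfty, (∀ n, 0 ≤ x n) → 0 ≤ f x) ∧
    ∀ (x : EllInfty) (c : ℝ), HasCesaro (⇑x) c → f x = c}

/-!
Write `W_θ(n) = ∑_{θn < i ≤ n} y_i`, so that `Θ_{θ,n} = W_θ(n) / (n(1-θ))`, and let `|y_i| ≤ M`.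
Windows compose up to one term, `W_{θθ'}(n) ≤ W_{θ'}(n) + W_θ(⌊θ'n⌋) + M`, and move by at most
`M((θ' - θ)n + 1)` when `θ` moves to `θ'`. Iterating the first, an eventual bound
`W_{θ'}(n) ≤ (1-θ')ns` yields `W_{θ'^k}(n) ≤ (1-θ'^k)ns + O(1)`; choosing `θ'^(k+1) < θ ≤ θ'^k` and
using the second gives `Θ_θ ≤ Θ_{θ'} + 3M(1-θ')/(1-θ)` for `θ ≤ θ' < 1`. Letting `θ' → 1` shows
`Θ_θ ≤ liminf_{θ'→1⁻} Θ_{θ'}` for every `θ`, so the limsup and the liminf at `1⁻` agree.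
-/

open Finset

lemma Filter.tendsto_liminf_of_eventually_le_liminf {α : Type*} {l : Filter α} [l.NeBot]
    {F : α → ℝ} (hF : IsBoundedUnder (· ≤ ·) l fun x => |F x|) (h : ∀ᶠ x in l, F x ≤ liminf F l) :
    Tendsto F l (𝓝 (liminf F l)) := by
  obtain ⟨hle, hge⟩ := isBoundedUnder_le_abs.1 hF
  exact tendsto_of_liminf_eq_limsup rfl
    (le_antisymm (limsup_le_of_le hge.isCoboundedUnder_le h) (liminf_le_limsup hle hge)) hle hge

def windowSum (y : ℕ → ℝ) (θ : ℝ) (n : ℕ) : ℝ := ∑ i ∈ Ioc ⌊θ * n⌋₊ n, y i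

section WindowSum

variable {y : ℕ → ℝ} {M θ θ' : ℝ}

lemma theta_eq_windowSum (hθ : 0 ≤ θ) (n : ℕ) :
    Theta y θ n = windowSum y θ n / (n * (1 - θ)) := by
  have hθn : (0 : ℝ) ≤ θ * n := by positivity
  rw [Theta, windowSum, ← sum_filter]
  congr 2
  ext i
  simp only [mem_filter, mem_Icc, mem_Ioc, ← Nat.floor_lt hθn]
  omega

lemma abs_sum_Ioc_le (hM : ∀ i, |y i| ≤ M) {a b : ℕ} (hab : a ≤ b) :
    |∑ i ∈ Ioc a b, y i| ≤ M * ((b : ℝ) - a) := by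
  calc |∑ i ∈ Ioc a b, y i| ≤ ∑ i ∈ Ioc a b, |y i| := abs_sum_le_sum_abs _ _
    _ ≤ #(Ioc a b) • M := sum_le_card_nsmul _ _ _ fun i _ => hM i
    _ = M * ((b : ℝ) - a) := by rw [Nat.card_Ioc, nsmul_eq_mul, Nat.cast_sub hab]; ring

lemma windowSum_mul_le (hM : ∀ i, |y i| ≤ M) (hθ : 0 ≤ θ) (hθ₁ : θ ≤ 1) (hθ' : 0 ≤ θ')
    (hθ'₁ : θ' ≤ 1) (n : ℕ) :
    windowSum y (θ * θ') n ≤ windowSum y θ' n + windowSum y θ ⌊θ' * n⌋₊ + M := by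
  set m := ⌊θ' * n⌋₊
  set a := ⌊θ * m⌋₊
  set a' := ⌊θ * θ' * n⌋₊
  have hm : (m : ℝ) ≤ θ' * n := Nat.floor_le (by positivity)
  have hm' : θ' * n < m + 1 := Nat.lt_floor_add_one _
  have haa' : a ≤ a' := Nat.floor_mono (by rw [mul_assoc]; exact mul_le_mul_of_nonneg_left hm hθ)
  have ha'a : a' ≤ a + 1 := by
    have : θ * θ' * n < a + 2 := by
      have := Nat.lt_floor_add_one (θ * m)
      nlinarith
    have : a' < a + 2 := (Nat.floor_lt (by positivity)).2 (by push_cast; linarith)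
    omega
  have ha'm : a' ≤ m :=
    Nat.floor_mono (by rw [mul_assoc]; exact mul_le_of_le_one_left (by positivity) hθ₁)
  have hmn : m ≤ n := Nat.floor_le_of_le (mul_le_of_le_one_left (by positivity) hθ'₁)
  have hgap : -∑ i ∈ Ioc a a', y i ≤ M := by
    have h := abs_sum_Ioc_le hM haa'
    have : ((a' : ℝ) - a) ≤ 1 := by
      have : (a' : ℝ) ≤ a + 1 := by exact_mod_cast ha'a
      linarith
    nlinarith [neg_abs_le (∑ i ∈ Ioc a a', y i), (abs_nonneg (y 0)).trans (hM 0)]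
  simp only [windowSum]
  rw [← sum_Ioc_consecutive _ ha'm hmn, ← sum_Ioc_consecutive _ haa' ha'm]
  linarith

lemma windowSum_le_add (hM : ∀ i, |y i| ≤ M) (hθ : 0 ≤ θ) (hθθ' : θ ≤ θ') (hθ'₁ : θ' ≤ 1)
    (n : ℕ) : windowSum y θ n ≤ windowSum y θ' n + M * ((θ' - θ) * n + 1) := by
  have hθ' : 0 ≤ θ' := hθ.trans hθθ'
  have hab : ⌊θ * n⌋₊ ≤ ⌊θ' * n⌋₊ := Nat.floor_mono (by gcongr)
  have hbn : ⌊θ' * n⌋₊ ≤ n := Nat.floor_le_of_le (mul_le_of_le_one_left (by positivity) hθ'₁)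
  have hgap : (⌊θ' * n⌋₊ : ℝ) - ⌊θ * n⌋₊ ≤ (θ' - θ) * n + 1 := by
    have := Nat.floor_le (by positivity : 0 ≤ θ' * n)
    have := Nat.lt_floor_add_one (θ * n)
    linarith
  have h := abs_sum_Ioc_le hM hab
  simp only [windowSum]
  rw [← sum_Ioc_consecutive _ hab hbn]
  nlinarith [le_abs_self (∑ i ∈ Ioc ⌊θ * n⌋₊ ⌊θ' * n⌋₊, y i), (abs_nonneg (y 0)).trans (hM 0)]

lemma abs_windowSum_le (hM : ∀ i, |y i| ≤ M) (hθ₁ : θ ≤ 1) (n : ℕ) :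
    |windowSum y θ n| ≤ M * ((1 - θ) * n + 1) := by
  have hbn : ⌊θ * n⌋₊ ≤ n := Nat.floor_le_of_le (mul_le_of_le_one_left (by positivity) hθ₁)
  refine (abs_sum_Ioc_le hM hbn).trans ?_
  have := Nat.lt_floor_add_one (θ * n)
  nlinarith [(abs_nonneg (y 0)).trans (hM 0)]

lemma eventually_abs_theta_le (hM : ∀ i, |y i| ≤ M) (hθ : 0 ≤ θ) (hθ₁ : θ < 1) :
    ∀ᶠ n in atTop, |Theta y θ n| ≤ 2 * M := by
  have hlen : Tendsto (fun n : ℕ => (n : ℝ) * (1 - θ)) atTop atTop :=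
    tendsto_natCast_atTop_atTop.atTop_mul_const (by linarith)
  filter_upwards [hlen.eventually_ge_atTop 1] with n hn
  have hW := abs_windowSum_le hM hθ₁.le n
  rw [theta_eq_windowSum hθ, abs_div, abs_of_pos (a := (n : ℝ) * (1 - θ)) (by linarith),
    div_le_iff₀ (by linarith)]
  nlinarith [(abs_nonneg (y 0)).trans (hM 0)]

lemma isBoundedUnder_le_theta (hM : ∀ i, |y i| ≤ M) (hθ : 0 ≤ θ) (hθ₁ : θ < 1) :
    IsBoundedUnder (· ≤ ·) atTop (Theta y θ) :=
  isBoundedUnder_of_eventually_le <|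
    (eventually_abs_theta_le hM hθ hθ₁).mono fun _ h => (abs_le.1 h).2

lemma isBoundedUnder_ge_theta (hM : ∀ i, |y i| ≤ M) (hθ : 0 ≤ θ) (hθ₁ : θ < 1) :
    IsBoundedUnder (· ≥ ·) atTop (Theta y θ) :=
  isBoundedUnder_of_eventually_ge <|
    (eventually_abs_theta_le hM hθ hθ₁).mono fun _ h => (abs_le.1 h).1

lemma abs_thetaSup_le (hM : ∀ i, |y i| ≤ M) (hθ : 0 ≤ θ) (hθ₁ : θ < 1) :
    |ThetaSup y θ| ≤ 2 * M := by
  have h := eventually_abs_theta_le hM hθ hθ₁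
  refine abs_le.2 ⟨le_limsup_of_frequently_le ?_ (isBoundedUnder_le_theta hM hθ hθ₁),
    limsup_le_of_le (isBoundedUnder_ge_theta hM hθ hθ₁).isCoboundedUnder_le ?_⟩
  · exact (h.mono fun _ h => (abs_le.1 h).1).frequently
  · exact h.mono fun _ h => (abs_le.1 h).2

lemma eventually_windowSum_le_of_thetaSup_lt (hM : ∀ i, |y i| ≤ M) (hθ : 0 ≤ θ) (hθ₁ : θ < 1)
    {s : ℝ} (hs : ThetaSup y θ < s) : ∀ᶠ n in atTop, windowSum y θ n ≤ (1 - θ) * n * s := by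
  filter_upwards [eventually_lt_of_limsup_lt hs (isBoundedUnder_le_theta hM hθ hθ₁),
    eventually_gt_atTop 0] with n hn hn₀
  have hlen : (0 : ℝ) < n * (1 - θ) := mul_pos (by exact_mod_cast hn₀) (by linarith)
  rw [theta_eq_windowSum hθ, div_lt_iff₀ hlen] at hn
  linarith

lemma thetaSup_le_of_eventually_windowSum_le (hM : ∀ i, |y i| ≤ M) (hθ : 0 ≤ θ) (hθ₁ : θ < 1)
    {A c : ℝ} (h : ∀ᶠ n in atTop, windowSum y θ n ≤ A * n + c) :
    ThetaSup y θ ≤ A / (1 - θ) := by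
  have hlim : Tendsto (fun n : ℕ => A / (1 - θ) + c / (1 - θ) / n) atTop (𝓝 (A / (1 - θ))) := by
    simpa using tendsto_const_nhds.add (tendsto_const_div_atTop_nhds_zero_nat (c / (1 - θ)))
  rw [← hlim.limsup_eq]
  refine limsup_le_limsup ?_ (isBoundedUnder_ge_theta hM hθ hθ₁).isCoboundedUnder_le
    hlim.isBoundedUnder_le
  filter_upwards [h, eventually_gt_atTop 0] with n hn hn₀
  have hn₀' : (0 : ℝ) < n := by exact_mod_cast hn₀
  have h1θ : 0 < 1 - θ := by linarith
  rw [theta_eq_windowSum hθ, div_le_iff₀ (mul_pos hn₀' h1θ)]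
  field_simp
  linarith

lemma exists_eventually_windowSum_pow_le (hM : ∀ i, |y i| ≤ M) (hθ : 0 < θ) (hθ₁ : θ ≤ 1)
    {s : ℝ} (h : ∀ᶠ n in atTop, windowSum y θ n ≤ (1 - θ) * n * s) (k : ℕ) :
    ∃ c, ∀ᶠ n in atTop, windowSum y (θ ^ k) n ≤ (1 - θ ^ k) * n * s + c := by
  induction k with
  | zero => exact ⟨0, Eventually.of_forall fun n => by simp [windowSum]⟩
  | succ k ih =>
    obtain ⟨c, hc⟩ := ih
    have hfloor : Tendsto (fun n : ℕ => ⌊θ * n⌋₊) atTop atTop :=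
      tendsto_nat_floor_atTop.comp (tendsto_natCast_atTop_atTop.const_mul_atTop hθ)
    refine ⟨c + |s| + M, ?_⟩
    filter_upwards [h, hfloor.eventually hc] with n hn hcn
    have hθk : 0 ≤ θ ^ k := pow_nonneg hθ.le k
    have hθk₁ : θ ^ k ≤ 1 := pow_le_one₀ hθ.le hθ₁
    have hcomp := windowSum_mul_le hM hθk hθk₁ hθ.le hθ₁ n
    have hround : (1 - θ ^ k) * ⌊θ * n⌋₊ * s ≤ (1 - θ ^ k) * (θ * n) * s + |s| := by
      have hfl : |(⌊θ * n⌋₊ : ℝ) - θ * n| ≤ 1 := abs_le.2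
        ⟨by linarith [Nat.lt_floor_add_one (θ * n)],
          by linarith [Nat.floor_le (by positivity : 0 ≤ θ * n)]⟩
      have : |(1 - θ ^ k) * ((⌊θ * n⌋₊ : ℝ) - θ * n) * s| ≤ |s| := by
        rw [abs_mul, abs_mul, abs_of_nonneg (by linarith : 0 ≤ 1 - θ ^ k)]
        exact mul_le_of_le_one_left (abs_nonneg s)
          (mul_le_one₀ (by linarith) (abs_nonneg _) hfl)
      linarith [le_abs_self ((1 - θ ^ k) * ((⌊θ * n⌋₊ : ℝ) - θ * n) * s)]
    rw [pow_succ]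
    linarith

lemma thetaSup_le_add (hM : ∀ i, |y i| ≤ M) (hθ : 0 < θ) (hθθ' : θ ≤ θ') (hθ'₁ : θ' < 1) :
    ThetaSup y θ ≤ ThetaSup y θ' + 3 * M * (1 - θ') / (1 - θ) := by
  have hθ' : 0 < θ' := hθ.trans_le hθθ'
  have hθ₁ : θ < 1 := hθθ'.trans_lt hθ'₁
  have hM₀ : 0 ≤ M := (abs_nonneg (y 0)).trans (hM 0)
  obtain ⟨k, hk₁, hk⟩ := exists_nat_pow_near_of_lt_one hθ hθ₁.le hθ' hθ'₁
  have hgap : θ' ^ k - θ ≤ 1 - θ' := by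
    have : θ' ^ k ≤ 1 := pow_le_one₀ hθ'.le hθ'₁.le
    rw [pow_succ] at hk₁
    nlinarith
  refine le_of_forall_pos_le_add fun δ hδ => ?_
  set s := ThetaSup y θ' + δ
  obtain ⟨c, hc⟩ := exists_eventually_windowSum_pow_le hM hθ' hθ'₁.le
    (eventually_windowSum_le_of_thetaSup_lt hM hθ'.le hθ'₁ (lt_add_of_pos_right _ hδ)) k
  have hbound : ThetaSup y θ ≤ ((1 - θ' ^ k) * s + M * (θ' ^ k - θ)) / (1 - θ) := by
    refine thetaSup_le_of_eventually_windowSum_le hM hθ.le hθ₁ (c := c + M) ?_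
    filter_upwards [hc] with n hn
    have := windowSum_le_add hM hθ.le hk (pow_le_one₀ hθ'.le hθ'₁.le) n
    linarith
  have hs : M - s ≤ 3 * M := by
    linarith [(abs_le.1 (abs_thetaSup_le hM hθ'.le hθ'₁)).1]
  have h1θ : 0 < 1 - θ := by linarith
  calc ThetaSup y θ ≤ ((1 - θ' ^ k) * s + M * (θ' ^ k - θ)) / (1 - θ) := hbound
    _ = s + (θ' ^ k - θ) * (M - s) / (1 - θ) := by field_simp; ring
    _ ≤ s + (1 - θ') * (3 * M) / (1 - θ) := by
      gcongr s + ?_ / _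
      exact (mul_le_mul_of_nonneg_left hs (sub_nonneg.2 hk)).trans
        (mul_le_mul_of_nonneg_right hgap (by linarith))
    _ = ThetaSup y θ' + 3 * M * (1 - θ') / (1 - θ) + δ := by ring

lemma isBoundedUnder_abs_thetaSup (hM : ∀ i, |y i| ≤ M) :
    IsBoundedUnder (· ≤ ·) (𝓝[<] 1) fun θ => |ThetaSup y θ| :=
  isBoundedUnder_of_eventually_le <| eventually_of_mem (Ioo_mem_nhdsLT zero_lt_one)
    fun _ hθ => abs_thetaSup_le hM hθ.1.le hθ.2

lemma thetaSup_le_liminf (hM : ∀ i, |y i| ≤ M) (hθ : 0 < θ) (hθ₁ : θ < 1) :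
    ThetaSup y θ ≤ liminf (ThetaSup y) (𝓝[<] 1) := by
  have hlim : Tendsto (fun θ' => ThetaSup y θ - 3 * M * (1 - θ') / (1 - θ)) (𝓝[<] 1)
      (𝓝 (ThetaSup y θ)) := by
    have : Continuous fun θ' : ℝ => ThetaSup y θ - 3 * M * (1 - θ') / (1 - θ) := by fun_prop
    simpa using (this.tendsto 1).mono_left nhdsWithin_le_nhds
  rw [← hlim.liminf_eq]
  refine liminf_le_liminf ?_ hlim.isBoundedUnder_ge
    (isBoundedUnder_le_abs.1 (isBoundedUnder_abs_thetaSup hM)).1.isCoboundedUnder_ge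
  filter_upwards [Ioo_mem_nhdsLT hθ₁] with θ' hθ'
  linarith [thetaSup_le_add hM hθ hθ'.1.le hθ'.2]

end WindowSum

/-- For every `x ∈ ℓ∞` the limit `t(x) = lim_{θ→1⁻} limsup_{n→∞} Θ_{θ,n}(x)` exists. -/
theorem stmt12 (x : EllInfty) :
    ∃ L : ℝ, Tendsto (fun θ : ℝ => ThetaSup (⇑x) θ) (𝓝[<] (1 : ℝ)) (𝓝 L) := by
  have hx : ∀ i, |x i| ≤ ‖x‖ := fun i => by
    simpa using lp.norm_apply_le_norm ENNReal.top_ne_zero x i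
  refine ⟨_, tendsto_liminf_of_eventually_le_liminf (isBoundedUnder_abs_thetaSup hx) ?_⟩
  filter_upwards [Ioo_mem_nhdsLT zero_lt_one] with θ hθ
  exact thetaSup_le_liminf hx hθ.1 hθ.2
end
end

section
/- Let (θ_k) be any sequence in (0,1) with θ_k → 1⁻ and let ℱ be any free ultrafilter on ℕ. Then for every x ∈ ℓ∞, t(x) = sup_{𝒢 ∈ βℕ*} ℱ-lim_k ( 𝒢-lim_n Θ_{θ_k,n}(x) ), the supremum being taken over all free ultrafilters 𝒢 on ℕ. -/
/-!
Up to rounding, `Θ_{τ,n}(x)` is the average of `x` over the window `(⌊τn⌋, n]`. The key fact: if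
`a < limsup_n Θ_{θ,n}(x)`, then for some `τ₀ < 1` and every `τ₁ < 1`, infinitely many `n`
satisfy `a < Θ_{τ,n}(x)` for all `τ ∈ [τ₀, τ₁]` simultaneously. Otherwise, for large `n` some
window `(⌊σn⌋, n]` with `σ ∈ [τ₀, τ₁]` has average at most `a`, so for
`a < c < b < limsup_n Θ_{θ,n}(x)` the centred sum `W(n) = ∑_{i ≤ n} xᵢ - cn` satisfies
`W(n) ≤ W(⌊σn⌋)`. Descending window by window from an `N` with `Θ_{θ,N}(x) > b` until we pass
below `⌊θN⌋` gives `W(N) ≤ W(m)` with `m` at most `(1 - τ₀)N` below `⌊θN⌋`, whereas `W` gains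
about `(b - c)(1 - θ)N` over `(⌊θN⌋, N]`: impossible for `τ₀` near `1`.

Hence `limsup_n Θ_{θ,n}(x)` tends to its supremum `s` over `θ ∈ (0,1)` as `θ → 1⁻`, so
`t(x) = s`. A free ultrafilter `𝒢` containing all these sets of `n` (for `τ₁ → 1`) has
`𝒢-lim_n Θ_{τ,n}(x) ≥ a` for all `τ` near `1`, while `𝒢-lim_n Θ_{τ,n}(x) ≤ limsup_n Θ_{τ,n}(x) ≤ s`
for every free `𝒢`.
-/

open Filter Topology

noncomputable section

section

variable {y : ℕ → ℝ} {C : ℝ} {G : Ultrafilter ℕ}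

theorem Theta_eq_sum_Ioc (y : ℕ → ℝ) {τ : ℝ} (hτ : 0 ≤ τ) (n : ℕ) :
    Theta y τ n = (∑ i ∈ Finset.Ioc ⌊τ * n⌋₊ n, y i) / (n * (1 - τ)) := by
  unfold Theta
  congr 1
  rw [← Finset.sum_filter]
  congr 1
  ext i
  simp only [Finset.mem_filter, Finset.mem_Icc, Finset.mem_Ioc,
    ← Nat.floor_lt (by positivity : 0 ≤ τ * n)]
  constructor
  · rintro ⟨⟨-, hin⟩, hτi⟩
    exact ⟨hτi, hin⟩
  · rintro ⟨hτi, hin⟩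
    exact ⟨⟨Nat.one_le_iff_ne_zero.2 (by omega), hin⟩, hτi⟩

theorem sub_floor_mul_mem_Ico {τ : ℝ} (hτ : 0 ≤ τ) (n : ℕ) :
    (n : ℝ) - ⌊τ * n⌋₊ ∈ Set.Ico (n * (1 - τ)) (n * (1 - τ) + 1) := by
  have hle := Nat.floor_le (by positivity : 0 ≤ τ * n)
  have hlt := Nat.lt_floor_add_one (τ * n)
  constructor <;> linarith

theorem floor_mul_le_self {τ : ℝ} (hτ : τ ≤ 1) (n : ℕ) : ⌊τ * n⌋₊ ≤ n :=
  Nat.floor_le_of_le (by nlinarith [(n.cast_nonneg : (0 : ℝ) ≤ n)])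

theorem abs_sum_Ioc_le_s14 (hC : ∀ i, |y i| ≤ C) {m n : ℕ} (h : m ≤ n) :
    |∑ i ∈ Finset.Ioc m n, y i| ≤ C * (n - m) := by
  calc |∑ i ∈ Finset.Ioc m n, y i| ≤ ∑ i ∈ Finset.Ioc m n, |y i| := Finset.abs_sum_le_sum_abs _ _
    _ ≤ ∑ _i ∈ Finset.Ioc m n, C := Finset.sum_le_sum fun i _ => hC i
    _ = C * (n - m) := by
      rw [Finset.sum_const, nsmul_eq_mul, Nat.card_Ioc, Nat.cast_sub h, mul_comm]

theorem eventually_abs_Theta_le (hC : ∀ i, |y i| ≤ C) {τ : ℝ} (hτ : τ ∈ Set.Ico 0 1) :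
    ∀ᶠ n in atTop, |Theta y τ n| ≤ C + 1 := by
  have hC0 : 0 ≤ C := (abs_nonneg _).trans (hC 0)
  filter_upwards [(tendsto_natCast_atTop_atTop.atTop_mul_const (sub_pos.2 hτ.2)).eventually_ge_atTop
    (C + 1)] with n hn
  have hd : 0 < (n : ℝ) * (1 - τ) := by linarith
  rw [Theta_eq_sum_Ioc y hτ.1, abs_div, abs_of_pos hd, div_le_iff₀ hd]
  calc |∑ i ∈ Finset.Ioc ⌊τ * n⌋₊ n, y i| ≤ C * (n - ⌊τ * n⌋₊) :=
        abs_sum_Ioc_le_s14 hC (floor_mul_le_self hτ.2.le n)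
    _ ≤ C * (n * (1 - τ) + 1) := by gcongr; exact (sub_floor_mul_mem_Ico hτ.1 n).2.le
    _ ≤ (C + 1) * (n * (1 - τ)) := by nlinarith

theorem isBoundedUnder_le_Theta (hC : ∀ i, |y i| ≤ C) {τ : ℝ} (hτ : τ ∈ Set.Ico 0 1) :
    IsBoundedUnder (· ≤ ·) atTop (Theta y τ) :=
  isBoundedUnder_of_eventually_le ((eventually_abs_Theta_le hC hτ).mono fun _ h => (abs_le.1 h).2)

theorem isCoboundedUnder_le_Theta (hC : ∀ i, |y i| ≤ C) {τ : ℝ} (hτ : τ ∈ Set.Ico 0 1) :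
    IsCoboundedUnder (· ≤ ·) atTop (Theta y τ) :=
  (isBoundedUnder_of_eventually_ge
    ((eventually_abs_Theta_le hC hτ).mono fun _ h => (abs_le.1 h).1)).isCoboundedUnder_le

theorem ThetaSup_le (hC : ∀ i, |y i| ≤ C) {τ : ℝ} (hτ : τ ∈ Set.Ico 0 1) : ThetaSup y τ ≤ C + 1 :=
  limsup_le_of_le (isCoboundedUnder_le_Theta hC hτ)
    ((eventually_abs_Theta_le hC hτ).mono fun _ h => (abs_le.1 h).2)

theorem ThetaSup_le_sSup (hC : ∀ i, |y i| ≤ C) {τ : ℝ} (hτ : τ ∈ Set.Ioo 0 1) :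
    ThetaSup y τ ≤ sSup (ThetaSup y '' Set.Ioo 0 1) :=
  le_csSup ⟨C + 1, Set.forall_mem_image.2 fun _ hσ => ThetaSup_le hC (Set.Ioo_subset_Ico_self hσ)⟩
    ⟨τ, hτ, rfl⟩

theorem exists_lt_ThetaSup_of_lt_sSup {a : ℝ} (ha : a < sSup (ThetaSup y '' Set.Ioo 0 1)) :
    ∃ θ ∈ Set.Ioo (0 : ℝ) 1, a < ThetaSup y θ := by
  obtain ⟨_, ⟨θ, hθ, rfl⟩, haθ⟩ :=
    exists_lt_of_lt_csSup ((Set.nonempty_Ioo.2 zero_lt_one).image _) ha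
  exact ⟨θ, hθ, haθ⟩

theorem exists_le_of_forall_exists_lt {α : Type*} [Preorder α] {W : ℕ → α} {P : ℕ → Prop} {q : ℕ}
    (h : ∀ n, q < n → ∃ m < n, P m ∧ W n ≤ W m) (n : ℕ) (hn : q < n) :
    ∃ m ≤ q, P m ∧ W n ≤ W m := by
  induction n using Nat.strong_induction_on with
  | _ n ih =>
    obtain ⟨m, hmn, hPm, hWm⟩ := h n hn
    rcases le_or_gt m q with hmq | hqm
    · exact ⟨m, hmq, hPm, hWm⟩
    · obtain ⟨m', hm'q, hPm', hWm'⟩ := ih m hmn hqm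
      exact ⟨m', hm'q, hPm', hWm.trans hWm'⟩

def centeredSum (y : ℕ → ℝ) (c : ℝ) (n : ℕ) : ℝ := ∑ i ∈ Finset.Ioc 0 n, y i - c * n

theorem centeredSum_sub_centeredSum (y : ℕ → ℝ) (c : ℝ) {m n : ℕ} (h : m ≤ n) :
    centeredSum y c n - centeredSum y c m = ∑ i ∈ Finset.Ioc m n, y i - c * (n - m) := by
  rw [centeredSum, centeredSum, ← Finset.sum_Ioc_consecutive y (Nat.zero_le m) h]
  ring

theorem neg_le_centeredSum_sub_centeredSum (hC : ∀ i, |y i| ≤ C) (c : ℝ) {m n : ℕ} (h : m ≤ n) :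
    -((C + |c|) * (n - m)) ≤ centeredSum y c n - centeredSum y c m := by
  have hmn : (m : ℝ) ≤ n := by exact_mod_cast h
  rw [centeredSum_sub_centeredSum y c h]
  nlinarith [neg_abs_le (∑ i ∈ Finset.Ioc m n, y i), abs_sum_Ioc_le_s14 hC h, le_abs_self c]

theorem centeredSum_sub_floor_le_of_Theta_le {σ b : ℝ} (c : ℝ) (hσ : σ ∈ Set.Ico 0 1) {n : ℕ}
    (hn : 0 < n) (h : Theta y σ n ≤ b) :
    centeredSum y c n - centeredSum y c ⌊σ * n⌋₊ ≤ (b - c) * (n - ⌊σ * n⌋₊) + |b| := by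
  have hd : 0 < (n : ℝ) * (1 - σ) := mul_pos (Nat.cast_pos.2 hn) (sub_pos.2 hσ.2)
  obtain ⟨hL₁, hL₂⟩ := sub_floor_mul_mem_Ico hσ.1 n
  rw [Theta_eq_sum_Ioc y hσ.1, div_le_iff₀ hd] at h
  rw [centeredSum_sub_centeredSum y c (floor_mul_le_self hσ.2.le n)]
  have : b * (n * (1 - σ) - (n - ⌊σ * n⌋₊)) ≤ |b| :=
    (le_abs_self _).trans (by
      rw [abs_mul]
      exact mul_le_of_le_one_right (abs_nonneg b) (abs_le.2 ⟨by linarith, by linarith⟩))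
  linarith

theorem le_centeredSum_sub_floor_of_le_Theta {σ b : ℝ} (c : ℝ) (hσ : σ ∈ Set.Ico 0 1) {n : ℕ}
    (hn : 0 < n) (h : b ≤ Theta y σ n) :
    (b - c) * (n - ⌊σ * n⌋₊) - |b| ≤ centeredSum y c n - centeredSum y c ⌊σ * n⌋₊ := by
  have hd : 0 < (n : ℝ) * (1 - σ) := mul_pos (Nat.cast_pos.2 hn) (sub_pos.2 hσ.2)
  obtain ⟨hL₁, hL₂⟩ := sub_floor_mul_mem_Ico hσ.1 n
  rw [Theta_eq_sum_Ioc y hσ.1, le_div_iff₀ hd] at h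
  rw [centeredSum_sub_centeredSum y c (floor_mul_le_self hσ.2.le n)]
  have : -|b| ≤ b * (n * (1 - σ) - (n - ⌊σ * n⌋₊)) :=
    (neg_le_neg (by
      rw [abs_mul]
      exact mul_le_of_le_one_right (abs_nonneg b) (abs_le.2 ⟨by linarith, by linarith⟩))).trans
      (neg_abs_le _)
  linarith

theorem eventually_exists_centeredSum_le {a c τ₀ τ₁ : ℝ} (hτ₀ : 0 ≤ τ₀) (hτ₁ : τ₁ < 1) (hac : a < c)
    (hbad : ∀ᶠ n in atTop, ∃ σ ∈ Set.Icc τ₀ τ₁, Theta y σ n ≤ a) :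
    ∀ᶠ n : ℕ in atTop, ∃ m < n, τ₀ * n - 1 ≤ m ∧ centeredSum y c n ≤ centeredSum y c m := by
  have hslope : 0 < (c - a) * (1 - τ₁) := mul_pos (sub_pos.2 hac) (sub_pos.2 hτ₁)
  filter_upwards [hbad, eventually_gt_atTop 0,
    (tendsto_natCast_atTop_atTop.const_mul_atTop hslope).eventually_ge_atTop |a|]
    with n ⟨σ, hσ, hσa⟩ hn hna
  have hσ' : σ ∈ Set.Ico 0 1 := ⟨hτ₀.trans hσ.1, hσ.2.trans_lt hτ₁⟩
  obtain ⟨hL, -⟩ := sub_floor_mul_mem_Ico hσ'.1 n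
  refine ⟨⌊σ * n⌋₊, (Nat.floor_lt (mul_nonneg hσ'.1 n.cast_nonneg)).2 ?_, ?_, ?_⟩
  · nlinarith [(Nat.cast_pos.2 hn : (0 : ℝ) < n), hσ'.2]
  · nlinarith [Nat.lt_floor_add_one (σ * n), hσ.1, (n.cast_nonneg : (0 : ℝ) ≤ n)]
  · have hdrop := centeredSum_sub_floor_le_of_Theta_le c hσ' hn hσa
    have hlen : (c - a) * (n * (1 - τ₁)) ≤ (c - a) * (n - ⌊σ * n⌋₊) :=
      mul_le_mul_of_nonneg_left (by nlinarith [hσ.2, n.cast_nonneg (α := ℝ)]) (sub_nonneg.2 hac.le)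
    linarith

theorem exists_centeredSum_le_of_forall_ge {τ₀ c : ℝ} (hτ₀ : 0 ≤ τ₀) {N₁ : ℕ}
    (hstep : ∀ n ≥ N₁, ∃ m < n, τ₀ * n - 1 ≤ m ∧ centeredSum y c n ≤ centeredSum y c m)
    {q N : ℕ} (hq : N₁ < q + 1) (hqN : q < N) :
    ∃ m ≤ q, τ₀ * (q + 1) - 1 ≤ m ∧ centeredSum y c N ≤ centeredSum y c m := by
  refine exists_le_of_forall_exists_lt (fun n hn => ?_) N hqN
  have hqn : (q : ℝ) + 1 ≤ n := by exact_mod_cast hn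
  obtain ⟨m, hmn, hm, hWm⟩ := hstep n (by omega)
  exact ⟨m, hmn, by nlinarith, hWm⟩

theorem frequently_forall_lt_Theta (hC : ∀ i, |y i| ≤ C) {θ a : ℝ} (hθ : θ ∈ Set.Ioo 0 1)
    (ha : a < ThetaSup y θ) :
    ∃ τ₀ ∈ Set.Ico θ 1, ∀ τ₁ < 1, ∃ᶠ n in atTop, ∀ τ ∈ Set.Icc τ₀ τ₁, a < Theta y τ n := by
  obtain ⟨b, hab, hb⟩ := exists_between ha
  obtain ⟨c, hac, hcb⟩ := exists_between hab
  have hC0 : 0 ≤ C + |c| := add_nonneg ((abs_nonneg _).trans (hC 0)) (abs_nonneg c)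
  have hκ : 0 < (b - c) * (1 - θ) := mul_pos (sub_pos.2 hcb) (sub_pos.2 hθ.2)
  have hshort : Tendsto (fun τ : ℝ => (C + |c|) * (1 - τ)) (𝓝[<] 1) (𝓝 0) := by
    have := ((by fun_prop : Continuous fun τ : ℝ => (C + |c|) * (1 - τ)).tendsto 1)
    simpa using this.mono_left nhdsWithin_le_nhds
  obtain ⟨τ₀, hτ₀, hτ₀κ⟩ := ((show ∀ᶠ τ in 𝓝[<] 1, τ ∈ Set.Ico θ 1 from Ico_mem_nhdsLT hθ.2).and
    (hshort.eventually (gt_mem_nhds (half_pos hκ)))).exists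
  refine ⟨τ₀, hτ₀, fun τ₁ hτ₁ => ?_⟩
  by_contra hbad
  simp only [not_frequently, not_forall, not_lt, exists_prop] at hbad
  obtain ⟨N₁, hN₁⟩ := eventually_atTop.1
    (eventually_exists_centeredSum_le (hθ.1.le.trans hτ₀.1) hτ₁ hac hbad)
  obtain ⟨N, hbN, hN₁N, hNb, hN⟩ := (frequently_lt_of_lt_limsup
    (isCoboundedUnder_le_Theta hC (Set.Ioo_subset_Ico_self hθ)) hb |>.and_eventually <|
    ((tendsto_natCast_atTop_atTop.const_mul_atTop hθ.1).eventually_ge_atTop (N₁ : ℝ)).and <|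
    ((tendsto_natCast_atTop_atTop.const_mul_atTop (half_pos hκ)).eventually_gt_atTop |b|).and <|
    eventually_gt_atTop 0).exists
  set q := ⌊θ * N⌋₊
  have hq := Nat.floor_le (mul_nonneg hθ.1.le N.cast_nonneg)
  have hq' := Nat.lt_floor_add_one (θ * N)
  have hqN : q < N := (Nat.floor_lt (mul_nonneg hθ.1.le N.cast_nonneg)).2
    (by nlinarith [(Nat.cast_pos.2 hN : (0 : ℝ) < N), hθ.2])
  obtain ⟨m, hmq, hm, hWm⟩ := exists_centeredSum_le_of_forall_ge (hθ.1.le.trans hτ₀.1) hN₁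
    (by exact_mod_cast hN₁N.trans_lt hq') hqN
  -- `W(N) - W(m) ≥ (b - c)(1 - θ)N / 2 - |b| > 0`, against `hWm`
  have hanchor := le_centeredSum_sub_floor_of_le_Theta c (Set.Ioo_subset_Ico_self hθ) hN hbN.le
  have htail := neg_le_centeredSum_sub_centeredSum hC c hmq
  have hqN' : (q : ℝ) + 1 ≤ N := by exact_mod_cast hqN
  have hgain : (b - c) * (N * (1 - θ)) ≤ (b - c) * (N - q) :=
    mul_le_mul_of_nonneg_left (by linarith) (sub_nonneg.2 hcb.le)
  have hloss : (C + |c|) * (q - m) ≤ (C + |c|) * (1 - τ₀) * N := by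
    rw [mul_assoc]
    exact mul_le_mul_of_nonneg_left (by nlinarith [hτ₀.2]) hC0
  nlinarith [N.cast_nonneg (α := ℝ)]

theorem IsFreeUltrafilter.le_atTop (hG : IsFreeUltrafilter G) :
    (G : Filter ℕ) ≤ atTop :=
  Nat.cofinite_eq_atTop ▸ hG

theorem exists_isFreeUltrafilter_forall_mem {E : ℕ → Set ℕ} (hE : Antitone E)
    (hfreq : ∀ j, ∃ᶠ n in atTop, n ∈ E j) :
    ∃ G : Ultrafilter ℕ, IsFreeUltrafilter G ∧ ∀ j, E j ∈ G := by
  have hanti : Antitone fun j => 𝓟 (E j ∩ Set.Ici j) := fun i j hij =>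
    principal_mono.2 (Set.inter_subset_inter (hE hij) (Set.Ici_subset_Ici.2 hij))
  have : (⨅ j, 𝓟 (E j ∩ Set.Ici j)).NeBot := iInf_neBot_of_directed' hanti.directed_ge fun j =>
    principal_neBot_iff.2 ((frequently_atTop.1 (hfreq j) j).imp fun _ h => ⟨h.2, h.1⟩)
  have hG := Ultrafilter.of_le (⨅ j, 𝓟 (E j ∩ Set.Ici j))
  refine ⟨Ultrafilter.of _, ?_, fun j =>
    hG (mem_iInf_of_mem j (mem_principal.2 Set.inter_subset_left))⟩
  rw [IsFreeUltrafilter, Nat.cofinite_eq_atTop]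
  intro s hs
  obtain ⟨j, hj⟩ := mem_atTop_sets.1 hs
  exact hG (mem_iInf_of_mem j (mem_principal.2 fun n hn => hj n hn.2))

theorem tendsto_ulim {u : ℕ → ℝ} {B : ℝ} (h : ∀ᶠ n in (G : Filter ℕ), |u n| ≤ B) :
    Tendsto u G (𝓝 (ulim G u)) := by
  obtain ⟨L, -, hL⟩ := isCompact_Icc.ultrafilter_le_nhds (G.map u) (by
    rw [Ultrafilter.coe_map, le_principal_iff]
    exact h.mono fun _ hn => abs_le.1 hn)
  exact tendsto_nhds_limUnder ⟨L, hL⟩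

theorem abs_ulim_le {u : ℕ → ℝ} {B : ℝ} (h : ∀ᶠ n in (G : Filter ℕ), |u n| ≤ B) :
    |ulim G u| ≤ B :=
  abs_le.2 ⟨ge_of_tendsto (tendsto_ulim h) (h.mono fun _ hn => (abs_le.1 hn).1),
    le_of_tendsto (tendsto_ulim h) (h.mono fun _ hn => (abs_le.1 hn).2)⟩

theorem IsFreeUltrafilter.eventually_abs_Theta_le (hG : IsFreeUltrafilter G) (hC : ∀ i, |y i| ≤ C)
    {τ : ℝ} (hτ : τ ∈ Set.Ico 0 1) : ∀ᶠ n in (G : Filter ℕ), |Theta y τ n| ≤ C + 1 :=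
  (_root_.eventually_abs_Theta_le hC hτ).filter_mono hG.le_atTop

theorem ulim_Theta_le_ThetaSup (hG : IsFreeUltrafilter G) (hC : ∀ i, |y i| ≤ C) {τ : ℝ}
    (hτ : τ ∈ Set.Ico 0 1) : ulim G (Theta y τ) ≤ ThetaSup y τ := by
  have h := hG.eventually_abs_Theta_le hC hτ
  rw [← (tendsto_ulim h).limsup_eq]
  exact limsup_le_limsup_of_le hG.le_atTop
    (isBoundedUnder_of_eventually_ge (h.mono fun _ hn => (abs_le.1 hn).1)).isCoboundedUnder_le
    (isBoundedUnder_le_Theta hC hτ)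

theorem exists_isFreeUltrafilter_eventually_lt_Theta (hC : ∀ i, |y i| ≤ C) {θ a : ℝ}
    (hθ : θ ∈ Set.Ioo 0 1) (ha : a < ThetaSup y θ) :
    ∃ G : Ultrafilter ℕ, IsFreeUltrafilter G ∧
      ∀ᶠ τ in 𝓝[<] (1 : ℝ), ∀ᶠ n in (G : Filter ℕ), a < Theta y τ n := by
  obtain ⟨τ₀, hτ₀, hfreq⟩ := frequently_forall_lt_Theta hC hθ ha
  let E : ℕ → Set ℕ := fun j => {n | ∀ τ ∈ Set.Icc τ₀ (1 - 1 / (j + 1)), a < Theta y τ n}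
  have hE : Antitone E := fun i j hij n hn τ hτ =>
    hn τ ⟨hτ.1, hτ.2.trans (sub_le_sub_left (Nat.one_div_le_one_div hij) 1)⟩
  obtain ⟨G, hG, hEG⟩ :=
    exists_isFreeUltrafilter_forall_mem hE fun j => hfreq _ (by simp; positivity)
  refine ⟨G, hG, ?_⟩
  filter_upwards [Ico_mem_nhdsLT hτ₀.2] with τ hτ
  obtain ⟨j, hj⟩ := exists_nat_one_div_lt (sub_pos.2 hτ.2)
  exact mem_of_superset (hEG j) fun n hn => hn τ ⟨hτ.1, by linarith⟩

theorem tendsto_ThetaSup (hC : ∀ i, |y i| ≤ C) :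
    Tendsto (ThetaSup y) (𝓝[<] 1) (𝓝 (sSup (ThetaSup y '' Set.Ioo 0 1))) := by
  refine tendsto_order.2 ⟨fun a ha => ?_, fun a ha => ?_⟩
  · obtain ⟨θ, hθ, haθ⟩ := exists_lt_ThetaSup_of_lt_sSup ha
    obtain ⟨b, hab, hbθ⟩ := exists_between haθ
    obtain ⟨τ₀, hτ₀, hfreq⟩ := frequently_forall_lt_Theta hC hθ hbθ
    filter_upwards [Ioo_mem_nhdsLT hτ₀.2] with τ hτ
    have hτ' : τ ∈ Set.Ico 0 1 := ⟨hθ.1.le.trans (hτ₀.1.trans hτ.1.le), hτ.2⟩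
    exact hab.trans_le (le_limsup_of_frequently_le
      ((hfreq τ hτ.2).mono fun n hn => (hn τ ⟨hτ.1.le, le_rfl⟩).le)
      (isBoundedUnder_le_Theta hC hτ'))
  · filter_upwards [Ioo_mem_nhdsLT zero_lt_one] with τ hτ
    exact (ThetaSup_le_sSup hC hτ).trans_lt ha

end

/-- For any sequence `θ_k → 1⁻` in `(0,1)`, any free ultrafilter `ℱ` and any `x ∈ ℓ∞`,
`t(x) = sup_{𝒢 ∈ βℕ*} ℱ-lim_k 𝒢-lim_n Θ_{θ_k,n}(x)`. -/
theorem stmt14 (θs : ℕ → ℝ) (hθ : ∀ k, θs k ∈ Set.Ioo (0 : ℝ) 1)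
    (hθlim : Tendsto θs atTop (𝓝 1)) (F : Ultrafilter ℕ) (hF : IsFreeUltrafilter F)
    (x : EllInfty) :
    tFun (⇑x) = sSup {r : ℝ | ∃ G : Ultrafilter ℕ, IsFreeUltrafilter G ∧
      r = ulim F (fun k => ulim G (fun n => Theta (⇑x) (θs k) n))} := by
  obtain ⟨C, hC⟩ : ∃ C, ∀ i, |x i| ≤ C :=
    ⟨‖x‖, fun i => by simpa using lp.norm_apply_le_norm ENNReal.top_ne_zero x i⟩
  have hθ' : ∀ k, θs k ∈ Set.Ico 0 1 := fun k => Set.Ioo_subset_Ico_self (hθ k)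
  have hlimF : ∀ G, IsFreeUltrafilter G → Tendsto (fun k => ulim G (Theta x (θs k))) F
      (𝓝 (ulim F fun k => ulim G (Theta x (θs k)))) := fun G hG =>
    tendsto_ulim (.of_forall fun k => abs_ulim_le (hG.eventually_abs_Theta_le hC (hθ' k)))
  rw [tFun, (tendsto_ThetaSup hC).limUnder_eq]
  refine Eq.symm (csSup_eq_of_forall_le_of_forall_lt_exists_gt ⟨_, F, hF, rfl⟩ ?_ ?_)
  · rintro _ ⟨G, hG, rfl⟩
    exact le_of_tendsto' (hlimF G hG) fun k =>
      (ulim_Theta_le_ThetaSup hG hC (hθ' k)).trans (ThetaSup_le_sSup hC (hθ k))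
  · intro w hw
    obtain ⟨θ, hθ₀, hwθ⟩ := exists_lt_ThetaSup_of_lt_sSup hw
    obtain ⟨a, hwa, haθ⟩ := exists_between hwθ
    obtain ⟨G, hG, hGa⟩ := exists_isFreeUltrafilter_eventually_lt_Theta hC hθ₀ haθ
    have hθs : Tendsto θs atTop (𝓝[<] 1) :=
      tendsto_nhdsWithin_iff.2 ⟨hθlim, .of_forall fun k => (hθ k).2⟩
    refine ⟨_, ⟨G, hG, rfl⟩, hwa.trans_le (ge_of_tendsto (hlimF G hG) ?_)⟩
    filter_upwards [(hθs.eventually hGa).filter_mono hF.le_atTop] with k hk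
    exact ge_of_tendsto (tendsto_ulim (hG.eventually_abs_Theta_le hC (hθ' k)))
      (hk.mono fun _ => le_of_lt)
end
end

section
/- For every x ∈ ℓ∞ and every infinite set A ⊆ ℕ, the function φ : (0,1) → ℝ defined by φ(θ) = liminf_{n∈A, n→∞} Θ_{θ,n}(x) is continuous; in fact |φ(θ+δ) − φ(θ)| ≤ 2δ‖x‖∞/(1−θ) whenever θ ∈ (0,1) and 0 < δ < 1−θ. -/
open Filter Topology

noncomputable section

/-!
Raising `θ` by `δ` removes at most `δn + 1` terms from the window `(θn, n]` and shrinks the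
normaliser `n(1 - θ)` by `nδ`, so `|Θ_{θ+δ,n}(x) - Θ_{θ,n}(x)| ≤ 2δ‖x‖/(1 - θ) + O(1/n)`.
Bounds that hold up to an error tending to zero pass to the `liminf` along any filter finer
than `atTop`, and the resulting local Lipschitz estimate gives continuity.
-/

open Finset

def tailSum (x : ℕ → ℝ) (s : ℝ) (n : ℕ) : ℝ :=
  ∑ i ∈ Icc 1 n, if s < (i : ℝ) then x i else 0

lemma Theta_eq_tailSum (x : ℕ → ℝ) (θ : ℝ) (n : ℕ) :
    Theta x θ n = tailSum x (θ * n) n / (n * (1 - θ)) := rfl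

lemma tailSum_self (x : ℕ → ℝ) (n : ℕ) : tailSum x n n = 0 :=
  sum_eq_zero fun i hi => if_neg <| not_lt.2 <| by exact_mod_cast (mem_Icc.1 hi).2

lemma card_filter_mem_Ioc_le (F : Finset ℕ) {s t : ℝ} (hs : 0 ≤ s) (hst : s ≤ t) :
    ((F.filter fun i : ℕ => s < i ∧ (i : ℝ) ≤ t).card : ℝ) ≤ t - s + 1 := by
  have hsub : F.filter (fun i : ℕ => s < i ∧ (i : ℝ) ≤ t) ⊆ Ioc ⌊s⌋₊ ⌊t⌋₊ := fun i hi => by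
    obtain ⟨-, hsi, hit⟩ := mem_filter.1 hi
    exact mem_Ioc.2 ⟨(Nat.floor_lt hs).2 hsi, Nat.le_floor hit⟩
  have hcard : ((F.filter fun i : ℕ => s < i ∧ (i : ℝ) ≤ t).card : ℝ) ≤ ⌊t⌋₊ - ⌊s⌋₊ := by
    rw [← Nat.cast_sub (Nat.floor_mono hst), ← Nat.card_Ioc]
    exact_mod_cast card_le_card hsub
  linarith [Nat.floor_le (hs.trans hst), Nat.sub_one_lt_floor s]

section tailSum

variable {x : ℕ → ℝ} {B : ℝ}

lemma abs_tailSum_sub_tailSum_le (hB : ∀ i, |x i| ≤ B) (n : ℕ) {s t : ℝ} (hs : 0 ≤ s)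
    (hst : s ≤ t) : |tailSum x s n - tailSum x t n| ≤ (t - s + 1) * B := by
  have hwindow : tailSum x s n - tailSum x t n =
      ∑ i ∈ (Icc 1 n).filter (fun i : ℕ => s < i ∧ (i : ℝ) ≤ t), x i := by
    rw [tailSum, tailSum, ← sum_sub_distrib, sum_filter]
    refine sum_congr rfl fun i _ => ?_
    by_cases hsi : s < (i : ℝ) <;> by_cases hti : t < (i : ℝ)
    · simp [hsi, hti, not_le.2 hti]
    · simp [hsi, not_lt.1 hti]
    · exact absurd (hst.trans_lt hti) hsi
    · simp [hsi, hti]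
  rw [hwindow]
  calc |∑ i ∈ (Icc 1 n).filter (fun i : ℕ => s < i ∧ (i : ℝ) ≤ t), x i|
      ≤ ((Icc 1 n).filter fun i : ℕ => s < i ∧ (i : ℝ) ≤ t).card * B := by
        refine (abs_sum_le_sum_abs _ _).trans ?_
        simpa using sum_le_card_nsmul _ _ _ fun i _ => hB i
    _ ≤ (t - s + 1) * B := by
        gcongr
        · exact (abs_nonneg _).trans (hB 0)
        · exact card_filter_mem_Ioc_le _ hs hst

lemma abs_tailSum_le (hB : ∀ i, |x i| ≤ B) {n : ℕ} {s : ℝ} (hs : 0 ≤ s) (hsn : s ≤ n) :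
    |tailSum x s n| ≤ (n - s + 1) * B := by
  simpa [tailSum_self] using abs_tailSum_sub_tailSum_le hB n hs hsn

lemma abs_Theta_le (hB : ∀ i, |x i| ≤ B) {θ : ℝ} (hθ₀ : 0 ≤ θ) (hθ₁ : θ < 1) (n : ℕ) :
    |Theta x θ n| ≤ 2 * B / (1 - θ) := by
  have hB₀ : 0 ≤ B := (abs_nonneg _).trans (hB 0)
  have h1θ : 0 < 1 - θ := sub_pos.2 hθ₁
  rcases Nat.eq_zero_or_pos n with rfl | hn
  · simp only [Theta, Nat.cast_zero, zero_mul, div_zero, abs_zero]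
    positivity
  have hn₁ : (1 : ℝ) ≤ n := by exact_mod_cast hn
  have hsum := abs_tailSum_le hB (n := n) (mul_nonneg hθ₀ n.cast_nonneg)
    (by nlinarith : θ * n ≤ n)
  have hden : (0 : ℝ) < n * (1 - θ) := mul_pos (by positivity) h1θ
  rw [Theta_eq_tailSum, abs_div, abs_of_pos hden, div_le_div_iff₀ hden h1θ]
  have hgap : 0 ≤ B * (1 - θ) * (n * (1 + θ) - 1) :=
    mul_nonneg (mul_nonneg hB₀ h1θ.le) (by nlinarith)
  nlinarith [mul_le_mul_of_nonneg_right hsum h1θ.le]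

lemma abs_Theta_add_sub_Theta_le (hB : ∀ i, |x i| ≤ B) {θ δ : ℝ} (hθ : 0 ≤ θ) (hδ : 0 ≤ δ)
    (hθδ : θ + δ < 1) {n : ℕ} (hn : 0 < n) :
    |Theta x (θ + δ) n - Theta x θ n|
      ≤ 2 * δ * B / (1 - θ) + (B / (1 - θ) + B / (1 - (θ + δ))) / n := by
  have hB₀ : 0 ≤ B := (abs_nonneg _).trans (hB 0)
  have h1θ : 0 < 1 - θ := by linarith
  have h1θδ : 0 < 1 - (θ + δ) := by linarith
  have hn₀ : (0 : ℝ) < n := by exact_mod_cast hn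
  set a : ℝ := n * (1 - θ) with ha
  set a' : ℝ := n * (1 - (θ + δ)) with ha'
  have ha₀ : 0 < a := by positivity
  have ha'₀ : 0 < a' := by positivity
  set S := tailSum x (θ * n) n
  set S' := tailSum x ((θ + δ) * n) n
  have hS' : |S'| ≤ (a' + 1) * B := by
    have := abs_tailSum_le hB (n := n) (by positivity) (by nlinarith : (θ + δ) * n ≤ n)
    rwa [show (n : ℝ) - (θ + δ) * n + 1 = a' + 1 by ring] at this
  have hSS' : |S - S'| ≤ (n * δ + 1) * B := by
    have := abs_tailSum_sub_tailSum_le hB n (by positivity) (by nlinarith : θ * n ≤ (θ + δ) * n)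
    rwa [show (θ + δ) * n - θ * n + 1 = n * δ + 1 by ring] at this
  have hdiff : Theta x (θ + δ) n - Theta x θ n = S' * (n * δ / (a' * a)) - (S - S') / a := by
    change S' / a' - S / a = _
    rw [show (n : ℝ) * δ = a - a' by ring]
    field_simp
    ring
  have hδθ : δ / (1 - θ) ≤ 1 := (div_le_one h1θ).2 (by linarith)
  calc |Theta x (θ + δ) n - Theta x θ n|
      ≤ |S'| * (n * δ / (a' * a)) + |S - S'| / a := by
        rw [hdiff]
        refine (abs_sub _ _).trans_eq ?_
        rw [abs_mul, abs_div (S - S'), abs_of_pos ha₀,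
          abs_of_nonneg (by positivity : 0 ≤ n * δ / (a' * a))]
    _ ≤ (a' + 1) * B * (n * δ / (a' * a)) + (n * δ + 1) * B / a := by gcongr
    _ = B * δ / (1 - θ) + δ / (1 - θ) * (B / (1 - (θ + δ)) / n)
          + (B * δ / (1 - θ) + B / (1 - θ) / n) := by
        rw [ha, ha']
        field_simp
    _ ≤ B * δ / (1 - θ) + B / (1 - (θ + δ)) / n + (B * δ / (1 - θ) + B / (1 - θ) / n) := by
        gcongr
        exact mul_le_of_le_one_left (by positivity) hδθ
    _ = 2 * δ * B / (1 - θ) + (B / (1 - θ) + B / (1 - (θ + δ))) / n := by ring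

end tailSum

section liminf

variable {α : Type*} {l : Filter α} [l.NeBot] {u v : α → ℝ} {c : ℝ}

lemma liminf_le_liminf_add_of_forall_pos (hu : IsBoundedUnder (· ≥ ·) l u)
    (hv : IsBoundedUnder (· ≤ ·) l v) (hv' : IsBoundedUnder (· ≥ ·) l v)
    (h : ∀ ε > 0, ∀ᶠ a in l, u a ≤ v a + c + ε) : liminf u l ≤ liminf v l + c := by
  refine le_of_forall_pos_le_add fun ε hε => ?_
  have hshift : IsCoboundedUnder (· ≥ ·) l fun a => v a + (c + ε) :=
    (isBoundedUnder_le_add hv isBoundedUnder_const).isCoboundedUnder_ge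
  calc liminf u l ≤ liminf (fun a => v a + (c + ε)) l :=
        liminf_le_liminf (by filter_upwards [h ε hε] with a ha; linarith) hu hshift
    _ = liminf v l + c + ε := by
        rw [liminf_add_const l v (c + ε) hv.isCoboundedUnder_ge hv', add_assoc]

lemma abs_liminf_sub_liminf_le (hu : IsBoundedUnder (· ≤ ·) l fun a => |u a|)
    (hv : IsBoundedUnder (· ≤ ·) l fun a => |v a|)
    (h : ∀ ε > 0, ∀ᶠ a in l, |u a - v a| ≤ c + ε) : |liminf u l - liminf v l| ≤ c := by
  obtain ⟨hu, hu'⟩ := isBoundedUnder_le_abs.1 hu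
  obtain ⟨hv, hv'⟩ := isBoundedUnder_le_abs.1 hv
  have huv := liminf_le_liminf_add_of_forall_pos hu' hv hv' fun ε hε => by
    filter_upwards [h ε hε] with a ha
    linarith [le_of_abs_le ha]
  have hvu := liminf_le_liminf_add_of_forall_pos hv' hu hu' fun ε hε => by
    filter_upwards [h ε hε] with a ha
    linarith [neg_le_of_abs_le ha]
  exact abs_sub_le_iff.2 ⟨by linarith, by linarith⟩

end liminf

lemma abs_liminf_Theta_add_sub_liminf_Theta_le {x : ℕ → ℝ} {B : ℝ} (hB : ∀ i, |x i| ≤ B)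
    {l : Filter ℕ} [l.NeBot] (hl : l ≤ atTop) {θ δ : ℝ} (hθ : 0 ≤ θ) (hδ : 0 ≤ δ)
    (hθδ : θ + δ < 1) :
    |liminf (Theta x (θ + δ)) l - liminf (Theta x θ) l| ≤ 2 * δ * B / (1 - θ) := by
  have hbdd : ∀ θ', 0 ≤ θ' → θ' < 1 → IsBoundedUnder (· ≤ ·) l fun n => |Theta x θ' n| :=
    fun θ' h₀ h₁ => isBoundedUnder_of ⟨_, abs_Theta_le hB h₀ h₁⟩
  refine abs_liminf_sub_liminf_le (hbdd _ (by positivity) hθδ) (hbdd _ hθ (by linarith))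
    fun ε hε => ?_
  have hsmall := (tendsto_const_div_atTop_nhds_zero_nat
    (B / (1 - θ) + B / (1 - (θ + δ)))).eventually (gt_mem_nhds hε)
  filter_upwards [hl (eventually_gt_atTop 0), hl hsmall] with n hn hεn
  exact (abs_Theta_add_sub_Theta_le hB hθ hδ hθδ hn).trans (by linarith)

lemma continuousOn_Ioo_of_abs_sub_le {f : ℝ → ℝ} {C : ℝ} (hC : 0 ≤ C)
    (hf : ∀ θ ∈ Set.Ioo (0 : ℝ) 1, ∀ δ, 0 < δ → δ < 1 - θ → |f (θ + δ) - f θ| ≤ C * δ / (1 - θ)) :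
    ContinuousOn f (Set.Ioo 0 1) := by
  have hbound : ∀ θ₀ ∈ Set.Ioo (0 : ℝ) 1, ∀ θ ∈ Set.Ioo (0 : ℝ) 1,
      |f θ - f θ₀| ≤ C / (1 - θ₀) * |θ - θ₀| := by
    intro θ₀ hθ₀ θ hθ
    rcases lt_trichotomy θ θ₀ with hlt | rfl | hgt
    · have h := hf θ hθ (θ₀ - θ) (by linarith) (by linarith [hθ₀.2])
      rw [add_sub_cancel, abs_sub_comm] at h
      rw [abs_of_neg (sub_neg.2 hlt), neg_sub, div_mul_eq_mul_div]
      refine h.trans (div_le_div_of_nonneg_left (by nlinarith) (by linarith [hθ₀.2]) ?_)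
      linarith
    · simp
    · have h := hf θ₀ hθ₀ (θ - θ₀) (by linarith) (by linarith [hθ.2])
      rw [add_sub_cancel, ← div_mul_eq_mul_div] at h
      rwa [abs_of_pos (sub_pos.2 hgt)]
  intro θ₀ hθ₀
  rw [ContinuousWithinAt, tendsto_iff_dist_tendsto_zero]
  refine squeeze_zero' (Eventually.of_forall fun _ => dist_nonneg)
    (eventually_nhdsWithin_of_forall fun θ hθ =>
      (hbound θ₀ hθ₀ θ hθ).trans_eq' (Real.dist_eq _ _))
    (tendsto_nhdsWithin_of_tendsto_nhds ?_)
  have hcont : Continuous fun θ => C / (1 - θ₀) * |θ - θ₀| := by fun_prop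
  simpa using hcont.tendsto θ₀

/-- For `x ∈ ℓ∞` and an infinite `A ⊆ ℕ`, the function
`φ(θ) = liminf_{n ∈ A} Θ_{θ,n}(x)` is continuous on `(0,1)`; in fact
`|φ(θ+δ) - φ(θ)| ≤ 2δ‖x‖/(1-θ)` whenever `θ ∈ (0,1)` and `0 < δ < 1 - θ`. -/
theorem stmt15 (x : EllInfty) (A : Set ℕ) (hA : A.Infinite) :
    ContinuousOn (fun θ : ℝ => liminf (fun n => Theta (⇑x) θ n) (atTop ⊓ 𝓟 A))
      (Set.Ioo 0 1) ∧
    ∀ θ ∈ Set.Ioo (0 : ℝ) 1, ∀ δ : ℝ, 0 < δ → δ < 1 - θ →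
      |liminf (fun n => Theta (⇑x) (θ + δ) n) (atTop ⊓ 𝓟 A) -
        liminf (fun n => Theta (⇑x) θ n) (atTop ⊓ 𝓟 A)| ≤ 2 * δ * ‖x‖ / (1 - θ) := by
  have hB (i : ℕ) : |x i| ≤ ‖x‖ := by simpa using lp.norm_apply_le_norm ENNReal.top_ne_zero x i
  have : (atTop ⊓ 𝓟 A).NeBot :=
    frequently_mem_iff_neBot.1 (Nat.frequently_atTop_iff_infinite.2 hA)
  have hlip : ∀ θ ∈ Set.Ioo (0 : ℝ) 1, ∀ δ : ℝ, 0 < δ → δ < 1 - θ →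
      |liminf (Theta x (θ + δ)) (atTop ⊓ 𝓟 A) - liminf (Theta x θ) (atTop ⊓ 𝓟 A)|
        ≤ 2 * δ * ‖x‖ / (1 - θ) := fun θ hθ δ hδ hδθ =>
    abs_liminf_Theta_add_sub_liminf_Theta_le hB inf_le_left hθ.1.le hδ.le (by linarith)
  refine ⟨continuousOn_Ioo_of_abs_sub_le (C := 2 * ‖x‖) (by positivity)
    fun θ hθ δ hδ hδθ => (hlip θ hθ δ hδ hδθ).trans_eq (by ring), hlip⟩
end
end
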